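/- arXiv:2407.06058 — 8 statements merged into one kernel-verified Lean document; each statement's English description precedes it below -/
import Mathlib

section
/- In Thompson's quandle P, the shift endomorphism ε (defined by ε(p_n) = p_{n+1}) satisfies ε²(p) = p_0 ▷ ε(p) for all p ∈ P. -/
/-!
Both `ε ∘ ε` and `(p 0 ◃ ·) ∘ ε` are endomorphisms of `P`, and they agree on the generators,
since `p (n + 2) = p 0 ◃ p (n + 1)` is a defining relation. By the uniqueness half of the
universal property, a homomorphism out of `P` is determined by its values on the generators.
-/

open Quandles

universe u v w

/-- `(P, p)` is a model of the quandle presented by generators `p 0, p 1, p 2, …` and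
relations `p j ◃ p k = p (k+1)` for all `j < k` (Thompson's quandle): the relations hold
and the universal property of the presentation is satisfied. -/
structure IsThompsonQuandle (P : Type v) [Quandle P] (p : ℕ → P) : Prop where
  rel : ∀ ⦃j k : ℕ⦄, j < k → p j ◃ p k = p (k + 1)
  lift : ∀ (Q : Type u) [Quandle Q] (q : ℕ → Q),
    (∀ ⦃j k : ℕ⦄, j < k → q j ◃ q k = q (k + 1)) →
    ∃! f : P →◃ Q, ∀ n, f (p n) = q n

def Shelf.actHom {S : Type*} [Shelf S] (x : S) : S →◃ S :=
  ⟨(x ◃ ·), Shelf.self_distrib⟩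

@[simp]
theorem Shelf.actHom_apply {S : Type*} [Shelf S] (x y : S) : Shelf.actHom x y = x ◃ y :=
  rfl

theorem IsThompsonQuandle.hom_ext {P : Type v} [Quandle P] {p : ℕ → P} {Q : Type u} [Quandle Q]
    (hP : IsThompsonQuandle.{u} P p) {f g : P →◃ Q} (h : ∀ n, f (p n) = g (p n)) : f = g :=
  (hP.lift Q (fun n => g (p n)) fun _ _ hjk => by rw [← g.map_act, hP.rel hjk]).unique h
    fun _ => rfl

/-- The shift endomorphism `ε` of Thompson's quandle satisfies `ε² p = p₀ ◃ ε p` for all `p`. -/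
theorem thompson_shift_sq {P : Type v} [Quandle P] {p : ℕ → P}
    (hP : IsThompsonQuandle.{v} P p)
    (ε : P →◃ P) (hε : ∀ n : ℕ, ε (p n) = p (n + 1)) :
    ∀ x : P, ε (ε x) = p 0 ◃ ε x := by
  have h : ε.comp ε = (Shelf.actHom (p 0)).comp ε :=
    hP.hom_ext fun n => by simp [hε, hP.rel (Nat.succ_pos n)]
  exact DFunLike.congr_fun h
end

section
/- Universal property of Thompson's quandle: if Q is a quandle with an endomorphism δ: Q → Q and an element q_0 ∈ Q such that δ²(q) = q_0 ▷ δ(q) for all q ∈ Q, then there is a unique quandle morphism f: P → Q with f(p_0) = q_0 and δ ∘ f = f ∘ ε. -/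
open Quandles

universe u v w

/-- Universal property of Thompson's quandle: if `Q` is a quandle with an endomorphism `δ`
and an element `q₀` such that `δ² q = q₀ ◃ δ q` for all `q`, then there is a unique quandle
morphism `f : P → Q` with `f p₀ = q₀` and `δ ∘ f = f ∘ ε`. -/
theorem thompson_universal_property {P : Type v} [Quandle P] {p : ℕ → P}
    (hP : IsThompsonQuandle.{u} P p)
    (ε : P →◃ P) (hε : ∀ n : ℕ, ε (p n) = p (n + 1))
    (Q : Type u) [Quandle Q] (δ : Q →◃ Q) (q₀ : Q)
    (hδ : ∀ q : Q, δ (δ q) = q₀ ◃ δ q) :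
    ∃! f : P →◃ Q, f (p 0) = q₀ ∧ ∀ x : P, δ (f x) = f (ε x) := by
  set q : ℕ → Q := fun n => δ^[n] q₀ with hq_def
  have aux : ∀ j m : ℕ, q j ◃ q (j + m + 1) = q (j + m + 2) := by
    intro j
    induction j with
    | zero =>
      intro m
      simpa [hq_def, Function.iterate_succ_apply'] using (hδ (δ^[m] q₀)).symm
    | succ j ih =>
      intro m
      have h := congrArg δ (ih m)
      rw [δ.map_act] at h
      simp only [hq_def] at h ⊢
      rw [← Function.iterate_succ_apply' δ, ← Function.iterate_succ_apply' δ,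
        ← Function.iterate_succ_apply' δ] at h
      have e1 : j + 1 + m + 1 = j + m + 1 + 1 := by omega
      have e2 : j + 1 + m + 2 = j + m + 2 + 1 := by omega
      rw [e1, e2]
      exact h
  have hqrel : ∀ ⦃j k : ℕ⦄, j < k → q j ◃ q k = q (k + 1) := by
    intro j k hjk
    obtain ⟨m, rfl⟩ : ∃ m, k = j + m + 1 := ⟨k - j - 1, by omega⟩
    exact aux j m
  obtain ⟨f, hf, huniq⟩ := hP.lift Q q hqrel
  have hshift : ∀ ⦃j k : ℕ⦄, j < k → q (j + 1) ◃ q (k + 1) = q (k + 1 + 1) :=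
    fun j k hjk => hqrel (by omega)
  obtain ⟨g, hg, hguniq⟩ := hP.lift Q (fun n => q (n + 1)) hshift
  have h1 : δ.comp f = g := hguniq _ (by
    intro n
    simp [ShelfHom.comp_apply, hf n, hq_def, Function.iterate_succ_apply'])
  have h2 : f.comp ε = g := hguniq _ (by
    intro n
    simp [ShelfHom.comp_apply, hε n, hf])
  refine ⟨f, ⟨by simpa [hq_def] using hf 0, fun x => ?_⟩, ?_⟩
  · have := congrArg (fun h : P →◃ Q => h x) (h1.trans h2.symm)
    simpa [ShelfHom.comp_apply] using this
  · rintro g' ⟨hg0, hgε⟩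
    refine huniq g' fun n => ?_
    induction n with
    | zero => simpa [hq_def] using hg0
    | succ n ih =>
      have : g' (p (n + 1)) = δ (g' (p n)) := by rw [← hε n, hgε]
      rw [this, ih]
      simp [hq_def, Function.iterate_succ_apply']
end

section
/- Thompson's quandle P has exactly two orbits, namely [p_0] and [p_1] = [p_2] = ⋯; equivalently, for any trivial quandle S (where x ▷ y = y), evaluation at (p_0, p_1) gives a bijection between quandle morphisms P → S and S × S. -/
open Quandles

universe u v w

/-! Into a trivial quandle `S` the relation `p 0 ◃ p n = p (n+1)` becomes `f (p n) = f (p (n+1))`,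
so a morphism `P → S` is determined by `f (p 0)` and `f (p 1)`; conversely every choice of these
two values satisfies all the defining relations, hence lifts. -/

namespace IsThompsonQuandle

variable {P : Type v} [Quandle P] {p : ℕ → P}

theorem map_rel {Q : Type w} [Quandle Q] (hP : IsThompsonQuandle.{u} P p) (f : P →◃ Q)
    ⦃j k : ℕ⦄ (hjk : j < k) : f (p j) ◃ f (p k) = f (p (k + 1)) := by
  rw [← f.map_act, hP.rel hjk]

theorem hom_ext_s4 {Q : Type u} [Quandle Q] (hP : IsThompsonQuandle.{u} P p) {f g : P →◃ Q}
    (h : ∀ n, f (p n) = g (p n)) : f = g :=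
  (hP.lift Q (fun n => g (p n)) (hP.map_rel g)).unique h fun _ => rfl

theorem map_succ_eq_map_one {S : Type w} [Quandle S] (hS : ∀ x y : S, x ◃ y = y)
    (hP : IsThompsonQuandle.{u} P p) (f : P →◃ S) (n : ℕ) : f (p (n + 1)) = f (p 1) := by
  induction n with
  | zero => rfl
  | succ n ih => rw [← hP.map_rel f n.succ_pos, hS, ih]

theorem exists_hom_of_trivial {S : Type u} [Quandle S] (hS : ∀ x y : S, x ◃ y = y)
    (hP : IsThompsonQuandle.{u} P p) (a b : S) :
    ∃ f : P →◃ S, f (p 0) = a ∧ ∀ n, f (p (n + 1)) = b := by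
  obtain ⟨f, hf, -⟩ := hP.lift S (fun n => if n = 0 then a else b) fun j k hjk => by
    simp [hS, Nat.ne_zero_of_lt hjk]
  exact ⟨f, by simp [hf]⟩

end IsThompsonQuandle

/-- Thompson's quandle `P` has exactly two orbits `[p 0]` and `[p 1] = [p 2] = ⋯`:
equivalently, for any trivial quandle `S` (where `x ◃ y = y`), evaluation at `(p 0, p 1)`
is a bijection between quandle morphisms `P → S` and `S × S`. -/
theorem thompson_two_orbits {P : Type v} [Quandle P] {p : ℕ → P}
    (hP : IsThompsonQuandle.{u} P p)
    (S : Type u) [Quandle S] (hS : ∀ x y : S, x ◃ y = y) :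
    Function.Bijective (fun f : P →◃ S => (f (p 0), f (p 1))) := by
  refine ⟨fun f g hfg => hP.hom_ext_s4 fun n => ?_, fun ⟨a, b⟩ => ?_⟩
  · obtain ⟨h0, h1⟩ := Prod.mk.inj hfg
    cases n with
    | zero => exact h0
    | succ n => rw [hP.map_succ_eq_map_one hS f, hP.map_succ_eq_map_one hS g, h1]
  · obtain ⟨f, h0, hsucc⟩ := hP.exists_hom_of_trivial hS a b
    exact ⟨f, Prod.ext h0 (hsucc 0)⟩
end

section
/- The generators p_0, p_1, p_2, ... of Thompson's quandle P are pairwise distinct; in particular, P is infinite. -/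
open Quandles

universe u v w

namespace ThompsonAux

/-- A Thompson-like piecewise-linear bijection of `ℚ`: identity below `c`,
slope `2` on `[c, c+1]`, translation by `1` above `c+1`. -/
def F (c x : ℚ) : ℚ := if x ≤ c then x else if x ≤ c + 1 then 2*x - c else x + 1

def Finv (c x : ℚ) : ℚ := if x ≤ c then x else if x ≤ c + 2 then (x + c)/2 else x - 1

lemma F_left_inv (c : ℚ) : Function.LeftInverse (Finv c) (F c) := by
  intro x; unfold F Finv; split_ifs <;> linarith

lemma F_right_inv (c : ℚ) : Function.RightInverse (Finv c) (F c) := by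
  intro x; unfold F Finv; split_ifs <;> linarith

lemma key {c d : ℚ} (h : c + 1 ≤ d) (x : ℚ) :
    F c (F d (Finv c x)) = F (d + 1) x := by
  unfold F Finv; split_ifs <;> linarith

/-- The corresponding permutation of `ULift.{w} ℚ`. -/
def G (c : ℚ) : Equiv.Perm (ULift.{w} ℚ) where
  toFun x := ⟨F c x.down⟩
  invFun x := ⟨Finv c x.down⟩
  left_inv x := congrArg ULift.up (F_left_inv c x.down)
  right_inv x := congrArg ULift.up (F_right_inv c x.down)

lemma G_rel {c d : ℚ} (h : c + 1 ≤ d) :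
    G.{w} c * G d * (G c)⁻¹ = G (d + 1) := by
  ext x
  have : (G.{w} c)⁻¹ x = ⟨Finv c x.down⟩ := rfl
  simp only [Equiv.Perm.mul_apply, this]
  exact key h x.down

lemma G_injective : Function.Injective (fun n : ℕ => G.{w} (n : ℚ)) := by
  have h : ∀ m n : ℕ, m < n → G.{w} (m : ℚ) ≠ G (n : ℚ) := by
    intro m n hmn h
    have := congrArg (fun e : Equiv.Perm (ULift.{w} ℚ) => (e ⟨(m : ℚ) + 1⟩).down) h
    simp only [G, Equiv.coe_fn_mk] at this
    have hmn' : (m : ℚ) + 1 ≤ (n : ℚ) := by exact_mod_cast hmn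
    unfold F at this
    split_ifs at this <;> linarith
  intro m n hmn
  by_contra hne
  rcases Nat.lt_or_ge m n with h' | h'
  · exact h m n h' hmn
  · exact h n m (lt_of_le_of_ne h' (Ne.symm hne)) hmn.symm

end ThompsonAux

/-- The generators `p 0, p 1, p 2, …` of Thompson's quandle are pairwise distinct;
in particular, `P` is infinite. -/
theorem thompson_generators_injective {P : Type v} [Quandle P] {p : ℕ → P}
    (hP : IsThompsonQuandle.{v} P p) :
    Function.Injective p ∧ Infinite P := by
  classical
  set Q : Type v := Quandle.Conj (Equiv.Perm (ULift.{v} ℚ)) with hQ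
  set q : ℕ → Q := fun n => ThompsonAux.G.{v} (n : ℚ) with hq
  have hrel : ∀ ⦃j k : ℕ⦄, j < k → q j ◃ q k = q (k + 1) := by
    intro j k hjk
    have hjk' : (j : ℚ) + 1 ≤ (k : ℚ) := by exact_mod_cast hjk
    have := ThompsonAux.G_rel.{v} hjk'
    simp only [hq, Quandle.conj_act_eq_conj]
    rw [show ((k : ℕ) + 1 : ℕ) = k + 1 from rfl]
    push_cast
    exact this
  obtain ⟨f, hf, -⟩ := hP.lift Q q hrel
  have hinj : Function.Injective p := by
    intro m n h
    have : q m = q n := by rw [← hf m, ← hf n, h]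
    exact ThompsonAux.G_injective this
  exact ⟨hinj, Infinite.of_injective p hinj⟩
end

section
/- For each j ≥ 0, let P_j ≤ P be the subquandle of Thompson's quandle generated by p_k for k ≥ j. Then p_j ∈ P_j \ P_{j+1}, so the chain P = P_0 ≥ P_1 ≥ P_2 ≥ ⋯ is strictly decreasing. -/
open Quandles

universe u v w

/-- Membership in the subquandle generated by a set `s`: the smallest subset of `P`
containing `s` and closed under the quandle operation and its inverse. -/
inductive Subquandle.closure {P : Type v} [Rack P] (s : Set P) : P → Prop
  | of {x : P} : x ∈ s → Subquandle.closure s x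
  | act {x y : P} : Subquandle.closure s x → Subquandle.closure s y →
      Subquandle.closure s (x ◃ y)
  | invAct {x y : P} : Subquandle.closure s x → Subquandle.closure s y →
      Subquandle.closure s (x ◃⁻¹ y)

/-!
Thompson's group `F` acts on the line by piecewise-linear maps `x n`, with `x n` the
identity on `(-∞, n]`; its relations `x j * x k = x (k + 1) * x j` for `j < k` make
`p n ↦ x n` a quandle homomorphism from `P` to the conjugation quandle of the permutation
group. Such a homomorphism maps the subquandle generated by `s` into every subgroup
containing the image of `s`, so everything in `P_{j+1}` fixes `(-∞, j + 1]` pointwise,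
whereas `x j` moves `j + 1` to `j + 2`.
-/

open Equiv MulAction Set

theorem ShelfHom.map_invAct {R S : Type*} [Rack R] [Rack S] (f : R →◃ S) (x y : R) :
    f (x ◃⁻¹ y) = f x ◃⁻¹ f y := by
  rw [← Rack.invAct_act_eq (f x) (f (x ◃⁻¹ y)), ← f.map_act, Rack.act_invAct_eq]

theorem Quandle.conj_act_eq_iff {G : Type*} [Group G] (a b c : Quandle.Conj G) :
    a ◃ b = c ↔ a * b = c * a := by
  rw [Quandle.conj_act_eq_conj, mul_inv_eq_iff_eq_mul]

theorem Subquandle.closure.mem_subgroup_of_conjHom {P G : Type*} [Rack P] [Group G]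
    (f : P →◃ Quandle.Conj G) (H : Subgroup G) {s : Set P} (hs : ∀ x ∈ s, f x ∈ H) {x : P}
    (hx : Subquandle.closure s x) : f x ∈ H := by
  induction hx with
  | of hx => exact hs _ hx
  | act _ _ hx hy =>
    rw [f.map_act, Quandle.conj_act_eq_conj]
    exact H.mul_mem (H.mul_mem hx hy) (H.inv_mem hx)
  | invAct _ _ hx hy =>
    rw [ShelfHom.map_invAct]
    exact H.mul_mem (H.mul_mem (H.inv_mem hx) hy) hx

section ThompsonGenerator

variable {K : Type*} [Field K] [LinearOrder K] [IsStrictOrderedRing K]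

/-- The standard piecewise-linear generator `x n` of Thompson's group `F`. -/
def thompsonGen (n : ℕ) : Perm K where
  toFun t := if t ≤ n then t else if t ≤ n + 1 then 2 * t - n else t + 1
  invFun t := if t ≤ n then t else if t ≤ n + 2 then (t + n) / 2 else t - 1
  left_inv t := by dsimp only; split_ifs <;> linarith
  right_inv t := by dsimp only; split_ifs <;> linarith

theorem thompsonGen_apply (n : ℕ) (t : K) :
    thompsonGen n t = if t ≤ n then t else if t ≤ n + 1 then 2 * t - n else t + 1 :=
  rfl

theorem thompsonGen_mul_of_lt {j k : ℕ} (h : j < k) :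
    (thompsonGen j * thompsonGen k : Perm K) = thompsonGen (k + 1) * thompsonGen j := by
  have hjk : (j : K) + 1 ≤ k := by exact_mod_cast h
  ext t
  simp only [Perm.mul_apply, thompsonGen_apply, Nat.cast_add, Nat.cast_one]
  split_ifs <;> linarith

theorem thompsonGen_mem_fixingSubgroup {a : K} {n : ℕ} (h : a ≤ n) :
    thompsonGen n ∈ fixingSubgroup (Perm K) (Iic a) :=
  (mem_fixingSubgroup_iff _).2 fun _ ht => if_pos (ht.trans h)

theorem thompsonGen_not_mem_fixingSubgroup (n : ℕ) :
    thompsonGen n ∉ fixingSubgroup (Perm K) (Iic ((n : K) + 1)) := by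
  intro h
  have hfix : thompsonGen n ((n : K) + 1) = n + 1 := (mem_fixingSubgroup_iff _).1 h _ le_rfl
  rw [thompsonGen_apply, if_neg (by linarith), if_pos le_rfl] at hfix
  linarith

end ThompsonGenerator

/-- For each `j`, `p j` lies in the subquandle `P_j` generated by `{p k : k ≥ j}` but not in
`P_{j+1}`, so the chain `P = P₀ ≥ P₁ ≥ P₂ ≥ ⋯` is strictly decreasing. -/
theorem thompson_chain_strict {P : Type v} [Quandle P] {p : ℕ → P}
    (hP : IsThompsonQuandle.{v} P p) (j : ℕ) :
    Subquandle.closure {x : P | ∃ k, j ≤ k ∧ x = p k} (p j) ∧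
    ¬ Subquandle.closure {x : P | ∃ k, j + 1 ≤ k ∧ x = p k} (p j) := by
  refine ⟨.of ⟨j, le_rfl, rfl⟩, fun hmem => ?_⟩
  obtain ⟨f, hf, -⟩ := hP.lift (Quandle.Conj (ULift.{v} (Perm ℚ)))
    (fun n => ULift.up (thompsonGen n)) fun _ _ h =>
      (Quandle.conj_act_eq_iff _ _ _).2 (congrArg ULift.up (thompsonGen_mul_of_lt h))
  let H := (fixingSubgroup (Perm ℚ) (Iic ((j : ℚ) + 1))).comap MulEquiv.ulift.toMonoidHom
  have hfix : f (p j) ∈ H := hmem.mem_subgroup_of_conjHom f H <| by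
    rintro _ ⟨k, hk, rfl⟩
    rw [hf]
    exact thompsonGen_mem_fixingSubgroup (by exact_mod_cast hk)
  rw [hf] at hfix
  exact thompsonGen_not_mem_fixingSubgroup j hfix
end

section
/- In the quandle Q presented by generators a, b with relations a ▷ (a ▷ b) = b ▷ (a ▷ b) and a ▷ (a ▷ (a ▷ b)) = b ▷ (a ▷ (a ▷ b)), define q_0 = a, q_1 = b, and q_n = q_{n-2} ▷ q_{n-1} for n ≥ 2. Then q_j ▷ q_k = q_{k+1} holds for all j < k. -/
open Quandles

universe u w

/-- `(Q, a, b)` is a model of the quandle presented by two generators `a, b` and the two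
relations `a ◃ (a ◃ b) = b ◃ (a ◃ b)` and `a ◃ (a ◃ (a ◃ b)) = b ◃ (a ◃ (a ◃ b))`. -/
structure IsFinThompsonQuandle (Q : Type w) [Quandle Q] (a b : Q) : Prop where
  rel1 : a ◃ (a ◃ b) = b ◃ (a ◃ b)
  rel2 : a ◃ (a ◃ (a ◃ b)) = b ◃ (a ◃ (a ◃ b))
  lift : ∀ (R : Type u) [Quandle R] (x y : R),
    x ◃ (x ◃ y) = y ◃ (x ◃ y) → x ◃ (x ◃ (x ◃ y)) = y ◃ (x ◃ (x ◃ y)) →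
    ∃! f : Q →◃ R, f a = x ∧ f b = y

/-- In the quandle `Q` presented by `a, b` with the two relations, the sequence defined by
`q 0 = a`, `q 1 = b`, `q (n+2) = q n ◃ q (n+1)` satisfies `q j ◃ q k = q (k+1)` for all
`j < k`. -/
theorem finThompson_sequence_relations {Q : Type w} [Quandle Q] {a b : Q}
    (hQ : IsFinThompsonQuandle.{u} Q a b)
    (q : ℕ → Q) (h0 : q 0 = a) (h1 : q 1 = b)
    (hrec : ∀ n : ℕ, q (n + 2) = q n ◃ q (n + 1)) :
    ∀ ⦃j k : ℕ⦄, j < k → q j ◃ q k = q (k + 1) := by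
  have hd : ∀ x y z : Q, x ◃ (y ◃ z) = (x ◃ y) ◃ (x ◃ z) := fun x y z => Shelf.self_distrib
  -- Step 1: `q 0 ◃ q (k+1) = q (k+2)` for all `k`.
  have hD : ∀ k, q 0 ◃ q (k + 1) = q (k + 2) := by
    intro k
    induction k using Nat.strong_induction_on with
    | _ k ih =>
      match k, ih with
      | 0, _ => exact (hrec 0).symm
      | 1, _ =>
        rw [hrec 1, hrec 0, h0, h1]
        exact hQ.rel1
      | (m + 2), ih =>
        calc q 0 ◃ q (m + 3) = q 0 ◃ (q (m + 1) ◃ q (m + 2)) := by rw [hrec (m + 1)]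
          _ = (q 0 ◃ q (m + 1)) ◃ (q 0 ◃ q (m + 2)) := hd _ _ _
          _ = q (m + 2) ◃ q (m + 3) := by rw [ih m (by omega), ih (m + 1) (by omega)]
          _ = q (m + 4) := (hrec (m + 2)).symm
  -- Step 2: `q 1 ◃ q (k+2) = q (k+3)` for all `k`.
  have hC : ∀ k, q 1 ◃ q (k + 2) = q (k + 3) := by
    intro k
    induction k using Nat.strong_induction_on with
    | _ k ih =>
      match k, ih with
      | 0, _ => exact (hrec 1).symm
      | 1, _ =>
        have e03 : q 0 ◃ q 3 = q 1 ◃ q 3 := by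
          have e3 : q 3 = q 0 ◃ q 2 := (hD 1).symm
          rw [e3, hrec 0, h0, h1]
          exact hQ.rel2
        calc q 1 ◃ q 3 = q 0 ◃ q 3 := e03.symm
          _ = q 0 ◃ (q 1 ◃ q 2) := by rw [hrec 1]
          _ = (q 0 ◃ q 1) ◃ (q 0 ◃ q 2) := hd _ _ _
          _ = q 2 ◃ q 3 := by rw [← hrec 0, hD 1]
          _ = q 4 := (hrec 2).symm
      | (m + 2), ih =>
        calc q 1 ◃ q (m + 4) = q 1 ◃ (q (m + 2) ◃ q (m + 3)) := by rw [hrec (m + 2)]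
          _ = (q 1 ◃ q (m + 2)) ◃ (q 1 ◃ q (m + 3)) := hd _ _ _
          _ = q (m + 3) ◃ q (m + 4) := by rw [ih m (by omega), ih (m + 1) (by omega)]
          _ = q (m + 5) := (hrec (m + 3)).symm
  -- Step 3: strong induction on `j`.
  have main : ∀ j, ∀ k, j < k → q j ◃ q k = q (k + 1) := by
    intro j
    induction j using Nat.strong_induction_on with
    | _ j ih =>
      match j, ih with
      | 0, _ =>
        intro k hk
        obtain ⟨k', rfl⟩ : ∃ k', k = k' + 1 := ⟨k - 1, by omega⟩
        exact hD k'
      | 1, _ =>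
        intro k hk
        obtain ⟨k', rfl⟩ : ∃ k', k = k' + 2 := ⟨k - 2, by omega⟩
        exact hC k'
      | (m + 2), ih =>
        intro k hk
        obtain ⟨k', rfl⟩ : ∃ k', k = k' + 1 := ⟨k - 1, by omega⟩
        calc q (m + 2) ◃ q (k' + 1)
            = (q m ◃ q (m + 1)) ◃ (q m ◃ q k') := by
              rw [← hrec m, ih m (by omega) k' (by omega)]
          _ = q m ◃ (q (m + 1) ◃ q k') := (hd _ _ _).symm
          _ = q m ◃ q (k' + 1) := by rw [ih (m + 1) (by omega) k' (by omega)]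
          _ = q (k' + 2) := ih m (by omega) (k' + 1) (by omega)
  exact fun j k hk => main j k hk
end

section
/- For any quandle Q, the abelianisation of the enveloping group Gr(Q) is a free abelian group on the set of orbits Orb(Q). -/
open Quandles

universe u

/-- The relation generating the orbit equivalence on a quandle: `x ◃ y ∼ y`. -/
def orbRel (Q : Type u) [Quandle Q] : Q → Q → Prop := fun u v => ∃ x : Q, u = x ◃ v

/-!
In an abelian group conjugation is trivial, so after abelianising the defining relation
`g_{x ◃ y} = g_x g_y g_x⁻¹` of `Gr(Q)` becomes `g_{x ◃ y} = g_y`. Hence `x ↦ [x]` induces a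
homomorphism `Gr(Q)ᵃᵇ → ℤ[Orb(Q)]`, and `[x] ↦ g_x` is well defined on orbits and induces one
back; both composites fix the generators.
-/

theorem Quandle.conj_act_eq_of_comm {G : Type*} [CommGroup G] (a b : Quandle.Conj G) :
    a ◃ b = b :=
  mul_inv_cancel_comm (G := G) a b

theorem ShelfHom.map_act_eq_of_comm {S G : Type*} [Shelf S] [CommGroup G]
    (f : S →◃ Quandle.Conj G) (x y : S) : f (x ◃ y) = f y := by
  rw [f.map_act, Quandle.conj_act_eq_of_comm]

@[ext]
theorem Rack.EnvelGroup.hom_ext {R G : Type*} [Rack R] [Group G] {f g : Rack.EnvelGroup R →* G}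
    (h : ∀ x, f (Rack.toEnvelGroup R x) = g (Rack.toEnvelGroup R x)) : f = g :=
  Rack.toEnvelGroup.map.symm.injective (ShelfHom.ext (funext h))

namespace Quandle

variable (Q : Type u) [Quandle Q]

abbrev Orb : Type u := Quot (orbRel Q)

def orbClass : Q →◃ Conj (Multiplicative (FreeAbelianGroup (Orb Q))) where
  toFun x := .ofAdd (.of (Quot.mk _ x))
  map_act' {x y} := by
    rw [conj_act_eq_of_comm, Quot.sound ⟨x, rfl⟩]

noncomputable def abelianizationToFreeOrb :
    Abelianization (Rack.EnvelGroup Q) →* Multiplicative (FreeAbelianGroup (Orb Q)) :=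
  Abelianization.lift (Rack.toEnvelGroup.map (orbClass Q))

def freeOrbToAbelianization :
    Multiplicative (FreeAbelianGroup (Orb Q)) →* Abelianization (Rack.EnvelGroup Q) :=
  AddMonoidHom.toMultiplicativeLeft <| FreeAbelianGroup.lift <|
    Quot.lift (fun x => .ofMul (.of (Rack.toEnvelGroup Q x))) <| by
      rintro _ y ⟨x, rfl⟩
      exact congrArg Additive.ofMul <|
        ((Conj.map Abelianization.of).comp (Rack.toEnvelGroup Q)).map_act_eq_of_comm x y

@[simp]
theorem abelianizationToFreeOrb_of (x : Q) :
    abelianizationToFreeOrb Q (.of (Rack.toEnvelGroup Q x)) = .ofAdd (.of (Quot.mk _ x)) :=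
  rfl

@[simp]
theorem freeOrbToAbelianization_ofAdd_of (x : Q) :
    freeOrbToAbelianization Q (.ofAdd (.of (Quot.mk _ x))) = .of (Rack.toEnvelGroup Q x) :=
  congrArg Additive.toMul (FreeAbelianGroup.lift_apply_of _ _)

end Quandle

/-- For any quandle `Q`, the abelianisation of the enveloping group `Gr(Q)` is a free
abelian group on the set of orbits `Orb(Q)`. -/
theorem abelianization_envelGroup_free (Q : Type u) [Quandle Q] :
    Nonempty (Abelianization (Rack.EnvelGroup Q) ≃*
      Multiplicative (FreeAbelianGroup (Quot (orbRel Q)))) :=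
  ⟨MonoidHom.toMulEquiv (Quandle.abelianizationToFreeOrb Q) (Quandle.freeOrbToAbelianization Q)
    (by ext x; simp) (by ext ⟨x⟩; simp)⟩
end

section
/- The Alexander module of Thompson's quandle P is isomorphic as a ℤ[q^{±1}]-module to ℤ[q^{±1}] ⊕ ℤ[q^{±1}]/(1−q) ≅ ℤ[q^{±1}] ⊕ ℤ. -/
/-- The Laurent polynomial ring `ℤ[q^{±1}]`. -/
abbrev Rq : Type := LaurentPolynomial ℤ

/-- The variable `q` of `ℤ[q^{±1}]`. -/
noncomputable def qv : Rq := LaurentPolynomial.T 1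

/-- The Alexander substitution: `x ▷ y ↦ (1 - q) • x + q • y`, in the free module `Rq²`
on the generators `a`, `b`. -/
noncomputable def aconj (x y : Rq × Rq) : Rq × Rq := (1 - qv) • x + qv • y

/-- The generator `a` of the Alexander module of Thompson's quandle. -/
noncomputable def aGen : Rq × Rq := (1, 0)

/-- The generator `b` of the Alexander module of Thompson's quandle. -/
noncomputable def bGen : Rq × Rq := (0, 1)

/-- The relations of the Alexander module of Thompson's quandle, obtained from
`a ◃ (a ◃ b) = b ◃ (a ◃ b)` and `a ◃ (a ◃ (a ◃ b)) = b ◃ (a ◃ (a ◃ b))` by the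
Alexander substitution. -/
noncomputable def alexRels : Set (Rq × Rq) :=
  { aconj aGen (aconj aGen bGen) - aconj bGen (aconj aGen bGen),
    aconj aGen (aconj aGen (aconj aGen bGen)) - aconj bGen (aconj aGen (aconj aGen bGen)) }

/-- The Alexander module of Thompson's quandle: the `ℤ[q^{±1}]`-module generated by `a, b`
subject to the Alexander-substituted relations. -/
abbrev AlexanderModule := (Rq × Rq) ⧸ Submodule.span Rq alexRels

/-!
Under the Alexander substitution both relations of Thompson's quandle become the same vector
`(1 - q) • (a - b)`. For any commutative ring `R` and `r ∈ R`, the map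
`(x, y) ↦ (x + y, x mod r)` identifies `R² ⧸ ⟨(r, -r)⟩` with `R × (R ⧸ (r))`. Finally, evaluation at
`q = 1` identifies `R[q^{±1}] ⧸ (1 - q)` with `R`, since `q` and hence every `q ^ n` is `1`
modulo `1 - q`.
-/

open LaurentPolynomial

section QuotientByAntidiagonal

variable {R : Type*} [CommRing R]

def sumResidue (r : R) : R × R →ₗ[R] R × (R ⧸ Ideal.span {r}) :=
  (LinearMap.fst R R R + LinearMap.snd R R R).prod ((Ideal.span {r}).mkQ ∘ₗ LinearMap.fst R R R)

theorem sumResidue_surjective (r : R) : Function.Surjective (sumResidue r) := by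
  rintro ⟨s, t⟩
  obtain ⟨x, rfl⟩ := Ideal.Quotient.mk_surjective t
  exact ⟨(x, s - x), by simp [sumResidue]⟩

theorem ker_sumResidue (r : R) :
    LinearMap.ker (sumResidue r) = Submodule.span R {(r, -r)} := by
  apply le_antisymm
  · rintro ⟨x, y⟩ hxy
    simp only [LinearMap.mem_ker, sumResidue, LinearMap.prod_apply, Function.prod,
      LinearMap.add_apply, LinearMap.fst_apply, LinearMap.snd_apply, LinearMap.coe_comp,
      Function.comp_apply, Submodule.mkQ_apply, Ideal.Quotient.mk_eq_mk, Prod.mk_eq_zero,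
      Ideal.Quotient.eq_zero_iff_mem, Ideal.mem_span_singleton'] at hxy
    obtain ⟨hsum, c, rfl⟩ := hxy
    refine Submodule.mem_span_singleton.mpr ⟨c, Prod.ext (smul_eq_mul c r) ?_⟩
    show c * -r = y
    linear_combination -hsum
  · rw [Submodule.span_le, Set.singleton_subset_iff]
    simp [sumResidue]

noncomputable def quotientSpanPairNegEquiv (r : R) :
    ((R × R) ⧸ Submodule.span R {(r, -r)}) ≃ₗ[R] R × (R ⧸ Ideal.span {r}) :=
  (Submodule.quotEquivOfEq _ _ (ker_sumResidue r).symm).trans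
    ((sumResidue r).quotKerEquivOfSurjective (sumResidue_surjective r))

end QuotientByAntidiagonal

namespace LaurentPolynomial

variable {R : Type*} [CommRing R]

theorem quotient_mk_T_eq_one (n : ℤ) :
    Ideal.Quotient.mk (Ideal.span {1 - T 1}) (T n : R[T;T⁻¹]) = 1 := by
  have hT : Ideal.Quotient.mk (Ideal.span {1 - T 1}) (T 1 : R[T;T⁻¹]) = 1 :=
    (Ideal.Quotient.eq.mpr (Ideal.mem_span_singleton_self _)).symm
  induction n using Int.induction_on with
  | zero => simp
  | succ k ih => rw [T_add, map_mul, ih, hT, one_mul]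
  | pred k ih =>
    have h := congrArg (Ideal.Quotient.mk (Ideal.span {1 - T 1})) (T_add (R := R) (-k - 1) 1)
    rwa [sub_add_cancel, map_mul, ih, hT, mul_one, eq_comm] at h

theorem quotient_mk_eq_C_eval₂_one (f : R[T;T⁻¹]) :
    Ideal.Quotient.mk (Ideal.span {1 - T 1}) f =
      Ideal.Quotient.mk (Ideal.span {1 - T 1}) (C (eval₂ (RingHom.id R) 1 f)) := by
  induction f using LaurentPolynomial.induction_on' with
  | add p q hp hq => rw [map_add, hp, hq, map_add, map_add, map_add]
  | C_mul_T n a => simp [quotient_mk_T_eq_one]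

theorem ker_eval₂_one :
    RingHom.ker (eval₂ (RingHom.id R) 1) = Ideal.span {(1 - T 1 : R[T;T⁻¹])} := by
  apply le_antisymm
  · intro f hf
    rw [← Ideal.Quotient.eq_zero_iff_mem, quotient_mk_eq_C_eval₂_one, RingHom.mem_ker.mp hf,
      map_zero, map_zero]
  · rw [Ideal.span_le, Set.singleton_subset_iff, SetLike.mem_coe, RingHom.mem_ker]
    simp

noncomputable def quotientSpanOneSubTEquiv :
    R[T;T⁻¹] ⧸ Ideal.span {(1 - T 1 : R[T;T⁻¹])} ≃+* R :=
  (Ideal.quotEquivOfEq ker_eval₂_one.symm).trans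
    (RingHom.quotientKerEquivOfSurjective fun r => ⟨C r, eval₂_C _ _ r⟩)

end LaurentPolynomial

theorem alexRels_eq : alexRels = {(1 - qv, -(1 - qv))} := by
  have hfirst : aconj aGen (aconj aGen bGen) - aconj bGen (aconj aGen bGen) =
      (1 - qv, -(1 - qv)) := by
    ext <;> simp [aconj, aGen, bGen]
  have hsecond : aconj aGen (aconj aGen (aconj aGen bGen)) -
      aconj bGen (aconj aGen (aconj aGen bGen)) = (1 - qv, -(1 - qv)) := by
    ext <;> simp [aconj, aGen, bGen]
  rw [alexRels, hfirst, hsecond, Set.pair_eq_singleton]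

/-- The Alexander module of Thompson's quandle is isomorphic as a `ℤ[q^{±1}]`-module to
`ℤ[q^{±1}] ⊕ ℤ[q^{±1}]/(1 - q) ≅ ℤ[q^{±1}] ⊕ ℤ`. -/
theorem alexander_module_thompson :
    Nonempty (AlexanderModule ≃ₗ[Rq] Rq × (Rq ⧸ Ideal.span {1 - qv})) ∧
    Nonempty ((Rq ⧸ Ideal.span {1 - qv}) ≃+ ℤ) :=
  ⟨⟨(Submodule.quotEquivOfEq _ _ (by rw [alexRels_eq])).trans (quotientSpanPairNegEquiv (1 - qv))⟩,
    ⟨quotientSpanOneSubTEquiv.toAddEquiv⟩⟩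
end
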